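/- The differences between successive CCM iterates for f₁ are square-summable: Σ_{r=0}^∞ ‖x^r − x^{r+1}‖² < ∞, where ‖·‖ is the Euclidean norm on ℝ^n. -/

import Mathlib

open Filter Topology Matrix

/-- Euclidean norm of a vector in `ℝ^k`. -/
noncomputable def eucNorm {k : ℕ} (v : Fin k → ℝ) : ℝ := Real.sqrt (∑ i, v i ^ 2)

/-- Soft-thresholding operator `S_λ(x) = sign(x) · max(|x| − λ, 0)`. -/
noncomputable def softThresh (lam x : ℝ) : ℝ := Real.sign x * max (|x| - lam) 0

/-- Gradient of `gr : ℝ^m → ℝ` at `t`. -/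
noncomputable def gradv {m : ℕ} (gr : (Fin m → ℝ) → ℝ) (t : Fin m → ℝ) : Fin m → ℝ :=
  fun i => fderiv ℝ gr t (Pi.single i 1)

/-- Hessian quadratic form `vᵀ (∇²gr(t)) v`. -/
noncomputable def hessQF {m : ℕ} (gr : (Fin m → ℝ) → ℝ) (t v : Fin m → ℝ) : ℝ :=
  ∑ i, ∑ j, v i * fderiv ℝ (fun s => gradv gr s j) t (Pi.single i 1) * v j

/-!
Let `Eᵢ` be the `i`-th column of `E` and `σ > 0` a lower bound for `Eᵢᵀ ∇²g Eᵢ` on a compact convex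
set `K` inside the domain of `g` that contains every `E x^{r,i}`. If the `i`-th step moves the
`i`-th coordinate by `δ`, then along the segment `θ ↦ f₁(x^{r,i-1} + θ δ eᵢ)` minus `σ δ² θ² / 2`
is convex on `[0, 1]`; as the step minimises this function at `θ = 1`, it lowers `f₁` by at least
`σ δ² / 2`. Over a sweep, `σ/2 ‖x^r − x^{r+1}‖² ≤ f₁(x^r) − f₁(x^{r+1})`, which telescopes against
`min f₁`.

Such a `K` exists because `{E x : x ∈ 𝒳, f₁ x ≤ f₁ x⁰}` is bounded: lift it to the convex set of
pairs `(E x, p)` with `λ ∑_{i∈S} |x_i| ≤ p`, on which `f₁` becomes `g t + p`. If it were unbounded,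
its closure would contain a ray from `(E x*, λ ∑ |x*_i|)` along which `g t + p` is constant, which
strict convexity of `g` forbids. The blow-up of `g` at the boundary makes its sublevel sets closed,
so `K` can be taken to be a ball intersected with such a sublevel set.
-/

open Set AffineMap

theorem le_sub_of_isMinOn_of_convexOn_sub_sq {h : ℝ → ℝ} {M : ℝ}
    (hconv : ConvexOn ℝ (Icc 0 1) (fun θ => h θ - M / 2 * θ ^ 2))
    (hmin : IsMinOn h (Icc 0 1) 1) : h 1 ≤ h 0 - M / 2 := by
  have hθ : ∀ θ ∈ Ico (0 : ℝ) 1, h 1 ≤ h 0 - M / 2 * θ := by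
    rintro θ ⟨hθ0, hθ1⟩
    have hcomb := hconv.2 (left_mem_Icc.2 zero_le_one) (right_mem_Icc.2 zero_le_one)
      (sub_nonneg.2 hθ1.le) hθ0 (by ring)
    have hle : h 1 ≤ h θ := hmin ⟨hθ0, hθ1.le⟩
    simp only [smul_eq_mul, mul_zero, mul_one, zero_add] at hcomb
    nlinarith
  have hlim : Tendsto (fun θ : ℝ => h 0 - M / 2 * θ) (𝓝[<] 1) (𝓝 (h 0 - M / 2)) := by
    have hcont : Continuous (fun θ : ℝ => h 0 - M / 2 * θ) := by fun_prop
    simpa using (hcont.tendsto 1).mono_left nhdsWithin_le_nhds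
  exact ge_of_tendsto hlim (eventually_of_mem (Ico_mem_nhdsLT zero_lt_one) hθ)

theorem ContinuousLinearMap.apply_eq_sum_mul_single {ι : Type*} [Fintype ι] [DecidableEq ι]
    (L : (ι → ℝ) →L[ℝ] ℝ) (v : ι → ℝ) : L v = ∑ j, v j * L (Pi.single j 1) := by
  conv_lhs => rw [← Finset.univ_sum_single v]
  simp only [map_sum]
  refine Finset.sum_congr rfl fun j _ => ?_
  rw [← smul_eq_mul, ← map_smul, ← Pi.single_smul, smul_eq_mul, mul_one]

section LineDerivatives

variable {m : ℕ} {O : Set (Fin m → ℝ)} {gr : (Fin m → ℝ) → ℝ}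

theorem hasDerivAt_comp_lineMap (hO : IsOpen O) (hg : ContDiffOn ℝ 2 gr O)
    (a b : Fin m → ℝ) {θ : ℝ} (hθ : lineMap a b θ ∈ O) :
    HasDerivAt (fun s => gr (lineMap a b s)) (∑ j, (b - a) j * gradv gr (lineMap a b θ) j) θ := by
  have hdiff : DifferentiableAt ℝ gr (lineMap a b θ) :=
    (hg.differentiableOn two_ne_zero).differentiableAt (hO.mem_nhds hθ)
  exact (hdiff.hasFDerivAt.comp_hasDerivAt θ hasDerivAt_lineMap).congr_deriv
    ((fderiv ℝ gr _).apply_eq_sum_mul_single _)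

theorem hasDerivAt_sum_gradv_comp_lineMap (hO : IsOpen O) (hg : ContDiffOn ℝ 2 gr O)
    (a b : Fin m → ℝ) {θ : ℝ} (hθ : lineMap a b θ ∈ O) :
    HasDerivAt (fun s => ∑ j, (b - a) j * gradv gr (lineMap a b s) j)
      (hessQF gr (lineMap a b θ) (b - a)) θ := by
  have hgrad : ∀ j, DifferentiableAt ℝ (fun t => gradv gr t j) (lineMap a b θ) := fun j =>
    (((hg.fderiv_of_isOpen hO one_add_one_eq_two.le).clm_apply contDiffOn_const).differentiableOn
      one_ne_zero).differentiableAt (hO.mem_nhds hθ)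
  have hsum := HasDerivAt.fun_sum (u := Finset.univ) fun j _ =>
    (((hgrad j).hasFDerivAt.comp_hasDerivAt θ hasDerivAt_lineMap).const_mul ((b - a) j))
  refine hsum.congr_deriv ?_
  rw [hessQF, Finset.sum_comm]
  refine Finset.sum_congr rfl fun j _ => ?_
  rw [ContinuousLinearMap.apply_eq_sum_mul_single _ (b - a), Finset.mul_sum]
  refine Finset.sum_congr rfl fun i _ => ?_
  ring

theorem continuousOn_hessQF (hO : IsOpen O) (hg : ContDiffOn ℝ 2 gr O) (v : Fin m → ℝ) :
    ContinuousOn (fun t => hessQF gr t v) O := by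
  have hgrad : ∀ j, ContinuousOn (fun t => fderiv ℝ (fun s => gradv gr s j) t) O := fun j =>
    ((hg.fderiv_of_isOpen hO one_add_one_eq_two.le).clm_apply
      contDiffOn_const).continuousOn_fderiv_of_isOpen hO le_rfl
  unfold hessQF
  fun_prop

theorem hessQF_smul (t : Fin m → ℝ) (c : ℝ) (v : Fin m → ℝ) :
    hessQF gr t (c • v) = c ^ 2 * hessQF gr t v := by
  simp only [hessQF, Finset.mul_sum, Pi.smul_apply, smul_eq_mul]
  refine Finset.sum_congr rfl fun i _ => Finset.sum_congr rfl fun j _ => ?_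
  ring

theorem convexOn_comp_lineMap_sub_sq (hO : IsOpen O) (hg : ContDiffOn ℝ 2 gr O)
    {a b : Fin m → ℝ} (hab : ∀ θ ∈ Icc (0 : ℝ) 1, lineMap a b θ ∈ O) {M : ℝ}
    (hM : ∀ θ ∈ Icc (0 : ℝ) 1, M ≤ hessQF gr (lineMap a b θ) (b - a)) :
    ConvexOn ℝ (Icc 0 1) (fun θ => gr (lineMap a b θ) - M / 2 * θ ^ 2) := by
  refine convexOn_of_hasDerivWithinAt2_nonneg (convex_Icc 0 1)
    (f' := fun θ => ∑ j, (b - a) j * gradv gr (lineMap a b θ) j - M * θ)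
    (f'' := fun θ => hessQF gr (lineMap a b θ) (b - a) - M) ?_ ?_ ?_ ?_
  · exact (hg.continuousOn.comp (lineMap_continuous (p := a) (q := b)).continuousOn hab).sub
      (by fun_prop)
  all_goals
    intro θ hθ
    rw [interior_Icc] at hθ
    have hθO := hab θ (Ioo_subset_Icc_self hθ)
  · have hsq : HasDerivAt (fun s : ℝ => M / 2 * s ^ 2) (M * θ) θ := by
      refine ((hasDerivAt_pow 2 θ).const_mul (M / 2)).congr_deriv ?_
      push_cast
      ring
    exact ((hasDerivAt_comp_lineMap hO hg a b hθO).sub hsq).hasDerivWithinAt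
  · exact ((hasDerivAt_sum_gradv_comp_lineMap hO hg a b hθO).sub
      ((hasDerivAt_id θ).const_mul M |>.congr_deriv (mul_one M))).hasDerivWithinAt
  · exact sub_nonneg.2 (hM θ (Ioo_subset_Icc_self hθ))

end LineDerivatives

theorem ConvexOn.isOpen_of_tendsto_atTop_frontier {V : Type*} [NormedAddCommGroup V]
    [NormedSpace ℝ V] {D : Set V} {g : V → ℝ} (hg : ConvexOn ℝ D g)
    (hne : (interior D).Nonempty)
    (hbl : ∀ t₀ ∈ frontier (interior D), Tendsto g (𝓝[interior D] t₀) atTop) : IsOpen D := by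
  refine interior_eq_iff_isOpen.1 (interior_subset.antisymm fun t ht => ?_)
  by_contra hti
  obtain ⟨u, hu⟩ := hne
  have hseg : ∀ s ∈ Ioc (0 : ℝ) 1, lineMap t u s ∈ interior D := fun s hs => by
    rw [lineMap_apply_module, add_comm]
    exact hg.1.combo_interior_closure_mem_interior hu (subset_closure ht) hs.1
      (sub_nonneg.2 hs.2) (by ring)
  have hlim : Tendsto (lineMap t u) (𝓝[>] (0 : ℝ)) (𝓝[interior D] t) := by
    refine tendsto_nhdsWithin_iff.2 ⟨?_, eventually_of_mem (Ioc_mem_nhdsGT zero_lt_one) hseg⟩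
    simpa using ((lineMap_continuous (p := t) (q := u)).tendsto (0 : ℝ)).mono_left
      nhdsWithin_le_nhds
  have hfr : t ∈ frontier (interior D) :=
    ⟨mem_closure_of_tendsto (tendsto_nhdsWithin_iff.1 hlim).1 (tendsto_nhdsWithin_iff.1 hlim).2,
      by rwa [interior_interior]⟩
  have hbdd : ∀ s ∈ Ioc (0 : ℝ) 1, g (lineMap t u s) ≤ max (g t) (g u) := fun s hs =>
    hg.le_max_of_mem_segment ht (interior_subset hu)
      (lineMap_mem_segment ℝ t u ⟨hs.1.le, hs.2⟩)
  obtain ⟨s, hs, hgt⟩ := ((eventually_of_mem (Ioc_mem_nhdsGT zero_lt_one) hbdd).and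
    (((hbl t hfr).comp hlim).eventually_gt_atTop (max (g t) (g u)))).exists
  exact hs.not_gt hgt

theorem isClosed_sublevel_of_tendsto_atTop_frontier {V : Type*} [TopologicalSpace V] {D : Set V}
    {g : V → ℝ} (hD : IsOpen D) (hg : ContinuousOn g D)
    (hbl : ∀ t₀ ∈ frontier D, Tendsto g (𝓝[D] t₀) atTop) (B : ℝ) :
    IsClosed {t ∈ D | g t ≤ B} := by
  refine isClosed_of_closure_subset fun t ht => ?_
  have hsub : {t ∈ D | g t ≤ B} ⊆ D := sep_subset _ _
  by_cases htD : t ∈ D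
  · have := (hg.continuousWithinAt htD).mono hsub |>.mem_closure ht (t := Iic B) fun s hs => hs.2
    exact ⟨htD, by simpa using this⟩
  · have hfr : t ∈ frontier D := ⟨closure_mono hsub ht, by rwa [hD.interior_eq]⟩
    have := mem_closure_iff_nhdsWithin_neBot.1 ht
    obtain ⟨s, hs, hgt⟩ := ((eventually_mem_nhdsWithin (s := {t ∈ D | g t ≤ B}) (a := t)).and
      (((hbl t hfr).mono_left (nhdsWithin_mono t hsub)).eventually_gt_atTop B)).exists
    exact absurd hs.2 hgt.not_ge

theorem ConvexOn.isOpen_and_isClosed_sublevel {V : Type*} [NormedAddCommGroup V]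
    [NormedSpace ℝ V] {D : Set V} {g : V → ℝ} (hg : ConvexOn ℝ D g) (hne : (interior D).Nonempty)
    (hgc : ContinuousOn g (interior D))
    (h : (∀ t₀ ∈ frontier (interior D), Tendsto g (𝓝[interior D] t₀) atTop) ∨ D = univ) :
    IsOpen D ∧ ∀ B, IsClosed {t ∈ D | g t ≤ B} := by
  rcases h with hbl | rfl
  · have hD := hg.isOpen_of_tendsto_atTop_frontier hne hbl
    rw [hD.interior_eq] at hbl hgc
    exact ⟨hD, isClosed_sublevel_of_tendsto_atTop_frontier hD hgc hbl⟩
  · rw [interior_univ] at hgc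
    exact ⟨isOpen_univ, fun B => by
      simpa using isClosed_le (continuousOn_univ.1 hgc) continuous_const⟩

theorem Convex.exists_ray_subset_closure {V : Type*} [NormedAddCommGroup V] [NormedSpace ℝ V]
    [ProperSpace V] {C : Set V} (hC : Convex ℝ C) {a : V} (ha : a ∈ C)
    (hCb : ¬ Bornology.IsBounded C) :
    ∃ d : V, ‖d‖ = 1 ∧ ∀ s : ℝ, 0 ≤ s → a + s • d ∈ closure C := by
  have hfar : ∀ k : ℕ, ∃ c ∈ C, (k : ℝ) < ‖c - a‖ := by
    intro k
    by_contra! h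
    exact hCb ((Metric.isBounded_closedBall (x := a) (r := k)).subset fun c hc => by
      simpa [dist_eq_norm] using h c hc)
  choose c hcC hck using hfar
  have hpos : ∀ k, 0 < ‖c k - a‖ := fun k => (Nat.cast_nonneg k).trans_lt (hck k)
  set u : ℕ → V := fun k => ‖c k - a‖⁻¹ • (c k - a)
  have hu : ∀ k, u k ∈ Metric.sphere (0 : V) 1 := fun k => by
    simp [u, norm_smul, (hpos k).ne']
  obtain ⟨d, hd, φ, hφ, hlim⟩ := (isCompact_sphere (0 : V) 1).tendsto_subseq hu
  refine ⟨d, by simpa using hd, fun s hs =>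
    mem_closure_of_tendsto ((hlim.const_smul s).const_add a) ?_⟩
  have hfar' : ∀ᶠ k in atTop, s ≤ ‖c (φ k) - a‖ :=
    ((tendsto_natCast_atTop_atTop.comp hφ.tendsto_atTop).eventually_ge_atTop s).mono
      fun k hk => hk.trans (hck _).le
  filter_upwards [hfar'] with k hk
  have := hC.add_smul_sub_mem ha (hcC (φ k))
    ⟨div_nonneg hs (hpos _).le, div_le_one_of_le₀ hk (hpos _).le⟩
  simpa [u, smul_smul, div_eq_mul_inv] using this

theorem ConvexOn.le_of_forall_add_smul_le {V : Type*} [AddCommGroup V] [Module ℝ V]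
    {D : Set V} {ψ : V → ℝ} (hψ : ConvexOn ℝ D ψ) {a d : V} {c : ℝ}
    (hray : ∀ s : ℝ, 0 ≤ s → a + s • d ∈ D) (hc : ∀ s : ℝ, 0 ≤ s → ψ (a + s • d) ≤ c)
    {s : ℝ} (hs : 0 ≤ s) : ψ (a + s • d) ≤ ψ a := by
  have hN : ∀ N : ℕ, 1 ≤ N → ψ (a + s • d) ≤ ψ a + (c - ψ a) / N := by
    intro N hN
    have hN0 : (0 : ℝ) < N := by exact_mod_cast hN
    have hcomb : (1 - (N : ℝ)⁻¹) • a + (N : ℝ)⁻¹ • (a + ((N : ℝ) * s) • d) = a + s • d := by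
      rw [smul_add, smul_smul, ← mul_assoc, inv_mul_cancel₀ hN0.ne', one_mul]
      module
    have ha : a ∈ D := by simpa using hray 0 le_rfl
    have h := hψ.2 ha (hray _ (mul_nonneg hN0.le hs))
      (sub_nonneg.2 (inv_le_one_of_one_le₀ (Nat.one_le_cast.2 hN))) (inv_nonneg.2 hN0.le)
      (by ring)
    rw [hcomb, smul_eq_mul, smul_eq_mul] at h
    have := hc _ (mul_nonneg hN0.le hs)
    rw [div_eq_inv_mul]
    nlinarith [inv_nonneg.2 hN0.le]
  have hlim : Tendsto (fun N : ℕ => ψ a + (c - ψ a) / N) atTop (𝓝 (ψ a)) := by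
    simpa using tendsto_const_nhds.add (tendsto_const_div_atTop_nhds_zero_nat (c - ψ a))
  exact ge_of_tendsto hlim (eventually_atTop.2 ⟨1, hN⟩)

theorem StrictConvexOn.eq_zero_of_add_smul_eq {T : Type*} [AddCommGroup T] [Module ℝ T]
    {D : Set T} {g : T → ℝ} (hg : StrictConvexOn ℝ D g) {t d : T} {e : ℝ}
    (ht : t ∈ D) (ht2 : t + (2 : ℝ) • d ∈ D)
    (h1 : g (t + d) + e = g t) (h2 : g (t + (2 : ℝ) • d) + 2 * e = g t) : d = 0 ∧ e = 0 := by
  by_cases hd : d = 0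
  · subst hd
    exact ⟨rfl, by simpa using h1⟩
  · have hne : t ≠ t + (2 : ℝ) • d := fun h => hd <| by
      simpa using (add_eq_left.1 h.symm : (2 : ℝ) • d = 0)
    have hmid : (1 / 2 : ℝ) • t + (1 / 2 : ℝ) • (t + (2 : ℝ) • d) = t + d := by module
    have := hg.2 ht ht2 hne one_half_pos one_half_pos (by norm_num)
    rw [hmid, smul_eq_mul, smul_eq_mul] at this
    linarith

section Sublevel

variable {T : Type*} [NormedAddCommGroup T] [NormedSpace ℝ T] [FiniteDimensional ℝ T]
  {D : Set T} {g : T → ℝ}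

/- An unbounded sublevel set would have a ray from `w₀` in its closure, along which the convex
function `g w.1 + w.2` is bounded above, hence constant; strict convexity of `g` forbids this. -/
theorem isBounded_sublevel_add_snd (hg : StrictConvexOn ℝ D g) (hgc : ContinuousOn g D)
    (hD : ∀ B, IsClosed {t ∈ D | g t ≤ B}) {A : Set (T × ℝ)} (hA : Convex ℝ A)
    (hAD : ∀ w ∈ A, w.1 ∈ D ∧ 0 ≤ w.2) {w₀ : T × ℝ} (hw₀ : w₀ ∈ A)
    (hmin : IsMinOn (fun w => g w.1 + w.2) A w₀) (c : ℝ) :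
    Bornology.IsBounded {w ∈ A | g w.1 + w.2 ≤ c} := by
  set ψ : T × ℝ → ℝ := fun w => g w.1 + w.2
  set L := {w ∈ A | ψ w ≤ c}
  by_contra hL
  obtain ⟨w, hwL⟩ : L.Nonempty :=
    nonempty_iff_ne_empty.2 fun h => hL (h ▸ Bornology.isBounded_empty)
  have hw₀L : w₀ ∈ L := ⟨hw₀, (hmin hwL.1).trans hwL.2⟩
  have hψ : ConvexOn ℝ (Prod.fst ⁻¹' D) ψ :=
    (hg.convexOn.comp_linearMap (LinearMap.fst ℝ T ℝ)).add
      ((LinearMap.snd ℝ T ℝ).convexOn (hg.1.linear_preimage (LinearMap.fst ℝ T ℝ)))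
  have hclosure : closure L ⊆ {w | w.1 ∈ D ∧ ψ w ∈ Icc (ψ w₀) c} := by
    have hclosed : IsClosed (Prod.fst ⁻¹' {t ∈ D | g t ≤ c} ∩ ψ ⁻¹' Icc (ψ w₀) c) :=
      ContinuousOn.preimage_isClosed_of_isClosed
        ((hgc.comp continuousOn_fst fun w hw => hw.1).add continuousOn_snd)
        ((hD c).preimage continuous_fst) isClosed_Icc
    refine (closure_minimal ?_ hclosed).trans fun w hw => ⟨hw.1.1, hw.2⟩
    rintro w ⟨hwA, hwc⟩
    have hw := hAD w hwA
    exact ⟨⟨hw.1, by simp only [ψ] at hwc; linarith⟩, hmin hwA, hwc⟩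
  have hLconv : Convex ℝ L := (hψ.subset (fun w hw => (hAD w hw).1) hA).convex_le c
  obtain ⟨d, hd, hray⟩ := hLconv.exists_ray_subset_closure hw₀L hL
  have hψray : ∀ s : ℝ, 0 ≤ s → ψ (w₀ + s • d) = ψ w₀ := fun s hs =>
    (hψ.le_of_forall_add_smul_le (fun s hs => (hclosure (hray s hs)).1)
      (fun s hs => (hclosure (hray s hs)).2.2) hs).antisymm (hclosure (hray s hs)).2.1
  have h1 := hψray 1 zero_le_one
  have h2 := hψray 2 zero_le_two
  simp only [ψ, Prod.fst_add, Prod.snd_add, Prod.smul_fst, Prod.smul_snd, one_smul,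
    smul_eq_mul] at h1 h2
  obtain ⟨hd1, hd2⟩ := hg.eq_zero_of_add_smul_eq (hAD w₀ hw₀).1
    (by simpa using (hclosure (hray 2 zero_le_two)).1) (e := d.2) (by linarith) (by linarith)
  have hd0 : d = 0 := Prod.ext hd1 hd2
  simp [hd0] at hd

theorem isBounded_image_sublevel {V : Type*} [AddCommGroup V] [Module ℝ V]
    (hg : StrictConvexOn ℝ D g) (hgc : ContinuousOn g D) (hD : ∀ B, IsClosed {t ∈ D | g t ≤ B})
    {E : V →ₗ[ℝ] T} {Ω : Set V} {P : V → ℝ} (hP : ConvexOn ℝ Ω P) (hP0 : ∀ z ∈ Ω, 0 ≤ P z)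
    (hΩD : ∀ z ∈ Ω, E z ∈ D) {z₀ : V} (hz₀ : z₀ ∈ Ω)
    (hmin : IsMinOn (fun z => g (E z) + P z) Ω z₀) (c : ℝ) :
    Bornology.IsBounded (E '' {z ∈ Ω | g (E z) + P z ≤ c}) := by
  -- lifting to `T × ℝ` replaces the convex penalty `P` by the linear coordinate `w.2`
  set A := (E.prodMap LinearMap.id) '' {q : V × ℝ | q.1 ∈ Ω ∧ P q.1 ≤ q.2}
  have hAD : ∀ w ∈ A, w.1 ∈ D ∧ 0 ≤ w.2 := by
    rintro _ ⟨⟨z, p⟩, ⟨hz, hp⟩, rfl⟩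
    exact ⟨hΩD z hz, (hP0 z hz).trans hp⟩
  have hminA : IsMinOn (fun w => g w.1 + w.2) A (E z₀, P z₀) := by
    rintro _ ⟨⟨z, p⟩, ⟨hz, hp⟩, rfl⟩
    exact (isMinOn_iff.1 hmin z hz).trans (by simpa using hp)
  refine (isBounded_sublevel_add_snd hg hgc hD (hP.convex_epigraph.linear_image _) hAD
    ⟨(z₀, P z₀), ⟨hz₀, le_rfl⟩, rfl⟩ hminA c).image_fst.subset ?_
  rintro _ ⟨z, ⟨hz, hzc⟩, rfl⟩
  exact ⟨(E z, P z), ⟨⟨(z, P z), ⟨hz, le_rfl⟩, rfl⟩, hzc⟩, rfl⟩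

end Sublevel

theorem convexOn_sum_abs {ι : Type*} (S : Finset ι) :
    ConvexOn ℝ univ (fun x : ι → ℝ => ∑ i ∈ S, |x i|) := by
  classical
  induction S using Finset.induction_on with
  | empty => simpa using convexOn_const (0 : ℝ) convex_univ
  | insert i S hi ih =>
    simp_rw [Finset.sum_insert hi]
    exact (convexOn_univ_norm.comp_linearMap (LinearMap.proj i)).add ih

theorem sq_eucNorm {k : ℕ} (v : Fin k → ℝ) : eucNorm v ^ 2 = ∑ i, v i ^ 2 :=
  Real.sq_sqrt (Finset.sum_nonneg fun i _ => sq_nonneg (v i))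

theorem summable_of_mul_le_sub {a f : ℕ → ℝ} {κ b : ℝ} (hκ : 0 < κ) (ha : ∀ r, 0 ≤ a r)
    (hf : ∀ r, κ * a r ≤ f r - f (r + 1)) (hb : ∀ r, b ≤ f r) : Summable a := by
  refine summable_of_sum_range_le ha (c := (f 0 - b) / κ) fun N => ?_
  rw [le_div_iff₀' hκ, Finset.mul_sum]
  calc ∑ r ∈ Finset.range N, κ * a r ≤ ∑ r ∈ Finset.range N, (f r - f (r + 1)) :=
        Finset.sum_le_sum fun r _ => hf r
    _ = f 0 - f N := Finset.sum_range_sub' f N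
    _ ≤ f 0 - b := by linarith [hb N]

theorem sweep_apply_eq {n : ℕ} {α : Type*} {y : ℕ → Fin n → α}
    (hy : ∀ i : Fin n, ∀ j, j ≠ i → y (i + 1) j = y i j) (j : Fin n)
    {a b : ℕ} (hab : a ≤ b) (hbn : b ≤ n) (hj : ∀ k, a ≤ k → k < b → k ≠ j) :
    y a j = y b j := by
  induction b, hab using Nat.le_induction with
  | base => rfl
  | succ b hab ih =>
    have hb : b < n := hbn
    rw [ih hb.le fun k hak hkb => hj k hak (hkb.trans b.lt_succ_self)]
    exact (hy ⟨b, hb⟩ j fun h => hj b hab b.lt_succ_self (congrArg Fin.val h).symm).symm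

theorem sweep_descent {n : ℕ} {y : ℕ → Fin n → ℝ}
    (hy : ∀ i : Fin n, ∀ j, j ≠ i → y (i + 1) j = y i j) {F : (Fin n → ℝ) → ℝ} {κ : ℝ}
    (hstep : ∀ i : Fin n, F (y (i + 1)) + κ * (y (i + 1) i - y i i) ^ 2 ≤ F (y i)) :
    κ * eucNorm (y 0 - y n) ^ 2 ≤ F (y 0) - F (y n) := by
  have hcoord : ∀ i : Fin n, (y 0 - y n) i ^ 2 = (y (i + 1) i - y i i) ^ 2 := fun i => by
    rw [Pi.sub_apply, sweep_apply_eq hy i (Nat.zero_le i) i.isLt.le fun k _ hk => hk.ne,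
      ← sweep_apply_eq hy i i.isLt le_rfl fun k hk _ => by omega]
    ring
  calc κ * eucNorm (y 0 - y n) ^ 2 = ∑ i : Fin n, κ * (y (i + 1) i - y i i) ^ 2 := by
        simp only [sq_eucNorm, hcoord, Finset.mul_sum]
    _ ≤ ∑ i : Fin n, (F (y i) - F (y (i + 1))) :=
        Finset.sum_le_sum fun i _ => by linarith [hstep i]
    _ = F (y 0) - F (y n) := by
        rw [Fin.sum_univ_eq_sum_range (fun k => F (y k) - F (y (k + 1))),
          Finset.sum_range_sub']

theorem exists_pos_le_hessQF {m : ℕ} {ι : Type*} [Finite ι] {O : Set (Fin m → ℝ)}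
    {gr : (Fin m → ℝ) → ℝ} (hO : IsOpen O) (hg : ContDiffOn ℝ 2 gr O)
    (hpos : ∀ t ∈ O, ∀ v : Fin m → ℝ, v ≠ 0 → 0 < hessQF gr t v) {K : Set (Fin m → ℝ)}
    (hK : IsCompact K) (hKO : K ⊆ O) (v : ι → Fin m → ℝ) (hv : ∀ i, v i ≠ 0) :
    ∃ σ > 0, ∀ i, ∀ t ∈ K, σ ≤ hessQF gr t (v i) := by
  choose σ hσ hσK using fun i => hK.exists_forall_le' ((continuousOn_hessQF hO hg (v i)).mono hKO)
    fun t ht => hpos t (hKO ht) (v i) (hv i)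
  obtain ⟨M, hM⟩ := Finite.exists_le fun i => (σ i)⁻¹
  refine ⟨(max M 1)⁻¹, by positivity, fun i t ht => le_trans ?_ (hσK i t ht)⟩
  exact inv_le_of_inv_le₀ (hσ i) ((hM i).trans (le_max_left M 1))

section CoordinateMinimization

variable {m n : ℕ} (E : Matrix (Fin m) (Fin n) ℝ) (X : Set (Fin n → ℝ)) (D : Set (Fin m → ℝ))
  (F : (Fin n → ℝ) → ℝ)

def IsCoordMin (i : Fin n) (p q : Fin n → ℝ) : Prop :=
  q ∈ X ∧ E *ᵥ q ∈ D ∧ (∀ j, j ≠ i → q j = p j) ∧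
    ∀ y ∈ X, (∀ j, j ≠ i → y j = p j) → E *ᵥ y ∈ D → F q ≤ F y

variable {E X D F}

theorem IsCoordMin.le {i : Fin n} {p q : Fin n → ℝ} (h : IsCoordMin E X D F i p q) (hp : p ∈ X)
    (hpD : E *ᵥ p ∈ D) : F q ≤ F p :=
  h.2.2.2 p hp (fun _ _ => rfl) hpD

theorem IsCoordMin.add_sq_le {gr : (Fin m → ℝ) → ℝ} {P : (Fin n → ℝ) → ℝ}
    (hF : ∀ x, F x = gr (E *ᵥ x) + P x) (hP : ConvexOn ℝ univ P) (hX : Convex ℝ X)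
    (hD : IsOpen D) (hg : ContDiffOn ℝ 2 gr D) {K : Set (Fin m → ℝ)} (hK : Convex ℝ K)
    (hKD : K ⊆ D) {σ : ℝ} {i : Fin n} (hσ : ∀ t ∈ K, σ ≤ hessQF gr t (fun k => E k i))
    {p q : Fin n → ℝ} (h : IsCoordMin E X D F i p q) (hp : p ∈ X) (hpK : E *ᵥ p ∈ K)
    (hqK : E *ᵥ q ∈ K) : F q + σ / 2 * (q i - p i) ^ 2 ≤ F p := by
  set δ := q i - p i
  have hEqp : E *ᵥ q - E *ᵥ p = δ • fun k => E k i := by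
    have hqp : q - p = Pi.single i δ := by
      ext j
      rcases eq_or_ne j i with rfl | hj
      · simp [δ]
      · simp [Pi.single_eq_of_ne hj, h.2.2.1 j hj]
    rw [← Matrix.mulVec_sub, hqp]
    ext k
    simp [Matrix.mulVec_single, mul_comm]
  have hline : ∀ θ : ℝ, E *ᵥ lineMap p q θ = lineMap (E *ᵥ p) (E *ᵥ q) θ := fun θ => by
    simp [lineMap_apply_module, Matrix.mulVec_add, Matrix.mulVec_smul]
  have hseg : ∀ θ ∈ Icc (0 : ℝ) 1, lineMap (E *ᵥ p) (E *ᵥ q) θ ∈ K := fun θ hθ =>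
    hK.lineMap_mem hpK hqK hθ
  have hgr := convexOn_comp_lineMap_sub_sq hD hg (fun θ hθ => hKD (hseg θ hθ))
    (M := σ * δ ^ 2) fun θ hθ => by
      rw [hEqp, hessQF_smul]
      nlinarith [hσ _ (hseg θ hθ), sq_nonneg δ]
  have hPline : ConvexOn ℝ (Icc 0 1) (fun θ : ℝ => P (lineMap p q θ)) :=
    (hP.comp_affineMap (lineMap p q)).subset (subset_univ _) (convex_Icc 0 1)
  have hmin : IsMinOn (fun θ : ℝ => F (lineMap p q θ)) (Icc 0 1) 1 := fun θ hθ => by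
    have hcoord : ∀ j, j ≠ i → lineMap p q θ j = p j := fun j hj => by
      simp [lineMap_apply_module, h.2.2.1 j hj, ← add_mul]
    simpa only [mem_ofPred_eq, lineMap_apply_one] using
      h.2.2.2 _ (hX.lineMap_mem hp h.1 hθ) hcoord (hline θ ▸ hKD (hseg θ hθ))
  have key := le_sub_of_isMinOn_of_convexOn_sub_sq (M := σ * δ ^ 2) (by
    refine (hgr.add hPline).congr fun θ _ => ?_
    simp only [Pi.add_apply, hF, hline]
    ring) hmin
  simp only [lineMap_apply_zero, lineMap_apply_one] at key
  linarith

theorem sweep_feasible_and_le {y : ℕ → Fin n → ℝ}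
    (hy : ∀ i : Fin n, IsCoordMin E X D F i (y i) (y (i + 1))) (h0 : y 0 ∈ X ∧ E *ᵥ y 0 ∈ D)
    {k : ℕ} (hk : k ≤ n) : (y k ∈ X ∧ E *ᵥ y k ∈ D) ∧ F (y k) ≤ F (y 0) := by
  induction k with
  | zero => exact ⟨h0, le_rfl⟩
  | succ k ih =>
    obtain ⟨⟨hyk, hykD⟩, hFk⟩ := ih (Nat.le_of_succ_le hk)
    have hstep := hy ⟨k, hk⟩
    exact ⟨⟨hstep.1, hstep.2.1⟩, (hstep.le hyk hykD).trans hFk⟩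

theorem ccm_feasible_and_le {x : ℕ → Fin n → ℝ} {xi : ℕ → ℕ → Fin n → ℝ}
    (hx0 : x 0 ∈ X ∧ E *ᵥ x 0 ∈ D) (hxi0 : ∀ r, xi r 0 = x r)
    (hstep : ∀ r, ∀ i : Fin n, IsCoordMin E X D F i (xi r i) (xi r (i + 1)))
    (hxsucc : ∀ r, x (r + 1) = xi r n) (r : ℕ) {k : ℕ} (hk : k ≤ n) :
    (xi r k ∈ X ∧ E *ᵥ xi r k ∈ D) ∧ F (xi r k) ≤ F (x 0) := by
  have hx : ∀ r, (x r ∈ X ∧ E *ᵥ x r ∈ D) ∧ F (x r) ≤ F (x 0) := by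
    intro r
    induction r with
    | zero => exact ⟨hx0, le_rfl⟩
    | succ r ih =>
      obtain ⟨hfeas, hle⟩ := sweep_feasible_and_le (hstep r) ((hxi0 r).symm ▸ ih.1) le_rfl
      rw [hxsucc]
      exact ⟨hfeas, (hxi0 r ▸ hle).trans ih.2⟩
  obtain ⟨hfeas, hle⟩ := sweep_feasible_and_le (hstep r) ((hxi0 r).symm ▸ (hx r).1) hk
  exact ⟨hfeas, (hxi0 r ▸ hle).trans (hx r).2⟩

theorem exists_isCompact_convex_of_sublevel {gr : (Fin m → ℝ) → ℝ} {P : (Fin n → ℝ) → ℝ}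
    (hF : ∀ x, F x = gr (E *ᵥ x) + P x) (hgs : StrictConvexOn ℝ D gr)
    (hgc : ContinuousOn gr D) (hclosed : ∀ B, IsClosed {t ∈ D | gr t ≤ B}) (hX : Convex ℝ X)
    (hP : ConvexOn ℝ univ P) (hP0 : ∀ z, 0 ≤ P z) {z₀ : Fin n → ℝ} (hz₀ : z₀ ∈ X)
    (hz₀D : E *ᵥ z₀ ∈ D) (hmin : ∀ y ∈ X, E *ᵥ y ∈ D → F z₀ ≤ F y) (c : ℝ) :
    ∃ K : Set (Fin m → ℝ), IsCompact K ∧ Convex ℝ K ∧ K ⊆ D ∧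
      ∀ z ∈ X, E *ᵥ z ∈ D → F z ≤ c → E *ᵥ z ∈ K := by
  have hΩ : Convex ℝ {z ∈ X | E *ᵥ z ∈ D} := hX.inter (hgs.1.linear_preimage E.mulVecLin)
  obtain ⟨R, hR⟩ := (isBounded_image_sublevel hgs hgc hclosed (E := E.mulVecLin)
    (hP.subset (subset_univ _) hΩ) (fun z _ => hP0 z) (fun z hz => hz.2) ⟨hz₀, hz₀D⟩
    (fun y hy => by simpa [hF] using hmin y hy.1 hy.2) c).subset_closedBall 0
  refine ⟨Metric.closedBall 0 R ∩ {t ∈ D | gr t ≤ c},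
    (isCompact_closedBall 0 R).inter_right (hclosed c),
    (convex_closedBall 0 R).inter (hgs.convexOn.convex_le c), fun t ht => ht.2.1,
    fun z hz hzD hzc => ⟨hR ⟨z, ⟨⟨hz, hzD⟩, by simpa [hF] using hzc⟩, rfl⟩, hzD, ?_⟩⟩
  linarith [hF z, hP0 z]

end CoordinateMinimization

theorem ccm_f1_square_summable_general
(m n : ℕ)
    (S : Finset (Fin n)) (lam : ℝ) (hlam : 0 < lam)
    (E : Matrix (Fin m) (Fin n) ℝ) (hE : ∀ j, ∃ i, E i j ≠ 0)
    (Dg : Set (Fin m → ℝ)) (gr : (Fin m → ℝ) → ℝ)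
    (hgconv : ConvexOn ℝ Dg gr)
    (hCg : (interior Dg).Nonempty)
    (hgs : StrictConvexOn ℝ (interior Dg) gr)
    (hgC2 : ContDiffOn ℝ 2 gr (interior Dg))
    (hhess : ∀ t ∈ interior Dg, ∀ v : Fin m → ℝ, v ≠ 0 → 0 < hessQF gr t v)
    (hA3 : (∀ t₀ ∈ frontier (interior Dg),
              Filter.Tendsto gr (nhdsWithin t₀ (interior Dg)) Filter.atTop)
           ∨ (S = Finset.univ ∧ (∀ t, 0 ≤ gr t) ∧ Dg = Set.univ))
    (X : Set (Fin n → ℝ)) (hX : X = {x | ∀ i ∉ S, 0 ≤ x i})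
    (F : (Fin n → ℝ) → ℝ)
    (hF : ∀ x, F x = gr (E.mulVec x) + lam * ∑ i ∈ S, |x i|)
    (XStar : Set (Fin n → ℝ))
    (hXStar : XStar = {x | x ∈ X ∧ E.mulVec x ∈ Dg ∧
                ∀ y ∈ X, E.mulVec y ∈ Dg → F x ≤ F y})
    (hXStarNe : XStar.Nonempty)
(x : ℕ → Fin n → ℝ) (xi : ℕ → ℕ → Fin n → ℝ)
    (hx0 : x 0 ∈ X) (hx0fin : E.mulVec (x 0) ∈ Dg)
    (hxi0 : ∀ r, xi r 0 = x r)
    (hstep : ∀ r, ∀ i : Fin n,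
        xi r ((i : ℕ) + 1) ∈ X ∧ E.mulVec (xi r ((i : ℕ) + 1)) ∈ Dg ∧
        (∀ j, j ≠ i → xi r ((i : ℕ) + 1) j = xi r (i : ℕ) j) ∧
        (∀ y ∈ X, (∀ j, j ≠ i → y j = xi r (i : ℕ) j) →
            E.mulVec y ∈ Dg → F (xi r ((i : ℕ) + 1)) ≤ F y))
    (hxsucc : ∀ r, x (r + 1) = xi r n) :
    Summable (fun r => eucNorm (x r - x (r + 1)) ^ 2) := by
  obtain ⟨xs, hxsX, hxsD, hxsmin⟩ := hXStar ▸ hXStarNe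
  obtain ⟨hopen, hclosed⟩ := hgconv.isOpen_and_isClosed_sublevel hCg hgC2.continuousOn
    (hA3.imp_right fun h => h.2.2)
  rw [hopen.interior_eq] at hgs hgC2 hhess
  have hP : ConvexOn ℝ Set.univ fun z : Fin n → ℝ => lam * ∑ i ∈ S, |z i| :=
    (convexOn_sum_abs S).smul hlam.le
  have hP0 (z : Fin n → ℝ) : 0 ≤ lam * ∑ i ∈ S, |z i| := by positivity
  have hXconv : Convex ℝ X := hX ▸ fun y hy z hz a b ha hb _ i hi =>
    add_nonneg (mul_nonneg ha (hy i hi)) (mul_nonneg hb (hz i hi))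
  have hstep' : ∀ r, ∀ i : Fin n, IsCoordMin E X Dg F i (xi r i) (xi r (i + 1)) := hstep
  have hiter := ccm_feasible_and_le ⟨hx0, hx0fin⟩ hxi0 hstep' hxsucc
  obtain ⟨K, hKc, hKconv, hKD, hK⟩ := exists_isCompact_convex_of_sublevel hF hgs
    hgC2.continuousOn hclosed hXconv hP hP0 hxsX hxsD hxsmin (F (x 0))
  obtain ⟨σ, hσ, hσK⟩ := exists_pos_le_hessQF hopen hgC2 hhess hKc hKD (fun i k => E k i)
    fun i h => (hE i).elim fun k hk => hk (congrFun h k)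
  have hiterK (r : ℕ) {k : ℕ} (hk : k ≤ n) : E *ᵥ xi r k ∈ K :=
    hK _ (hiter r hk).1.1 (hiter r hk).1.2 (hiter r hk).2
  have hx (r : ℕ) : x r ∈ X ∧ E *ᵥ x r ∈ Dg := hxi0 r ▸ (hiter r (Nat.zero_le n)).1
  refine summable_of_mul_le_sub (half_pos hσ) (fun r => sq_nonneg _) (fun r => ?_)
    fun r => hxsmin _ (hx r).1 (hx r).2
  rw [hxsucc, ← hxi0]
  exact sweep_descent (fun i => (hstep' r i).2.2.1) fun i =>
    (hstep' r i).add_sq_le hF hP hXconv hopen hgC2 hKconv hKD (hσK i) (hiter r i.isLt.le).1.1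
      (hiterK r i.isLt.le) (hiterK r i.isLt)

/-- The successive differences of the CCM iterates for `f₁` are square-summable. -/
theorem ccm_f1_square_summable
(m n : ℕ) (hm : 0 < m) (hn : 0 < n)
    (S : Finset (Fin n)) (lam : ℝ) (hlam : 0 < lam)
    (E : Matrix (Fin m) (Fin n) ℝ) (hE : ∀ j, ∃ i, E i j ≠ 0)
    (Dg : Set (Fin m → ℝ)) (gr : (Fin m → ℝ) → ℝ)
    (hDg : Convex ℝ Dg) (hgconv : ConvexOn ℝ Dg gr)
    (hCg : (interior Dg).Nonempty)
    (hgs : StrictConvexOn ℝ (interior Dg) gr)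
    (hgC2 : ContDiffOn ℝ 2 gr (interior Dg))
    (hhess : ∀ t ∈ interior Dg, ∀ v : Fin m → ℝ, v ≠ 0 → 0 < hessQF gr t v)
    (hA3 : (∀ t₀ ∈ frontier (interior Dg),
              Filter.Tendsto gr (nhdsWithin t₀ (interior Dg)) Filter.atTop)
           ∨ (S = Finset.univ ∧ (∀ t, 0 ≤ gr t) ∧ Dg = Set.univ))
    (X : Set (Fin n → ℝ)) (hX : X = {x | ∀ i ∉ S, 0 ≤ x i})
    (F : (Fin n → ℝ) → ℝ)
    (hF : ∀ x, F x = gr (E.mulVec x) + lam * ∑ i ∈ S, |x i|)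
    (XStar : Set (Fin n → ℝ))
    (hXStar : XStar = {x | x ∈ X ∧ E.mulVec x ∈ Dg ∧
                ∀ y ∈ X, E.mulVec y ∈ Dg → F x ≤ F y})
    (hXStarNe : XStar.Nonempty)
(x : ℕ → Fin n → ℝ) (xi : ℕ → ℕ → Fin n → ℝ)
    (hx0 : x 0 ∈ X) (hx0fin : E.mulVec (x 0) ∈ Dg)
    (hxi0 : ∀ r, xi r 0 = x r)
    (hstep : ∀ r, ∀ i : Fin n,
        xi r ((i : ℕ) + 1) ∈ X ∧ E.mulVec (xi r ((i : ℕ) + 1)) ∈ Dg ∧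
        (∀ j, j ≠ i → xi r ((i : ℕ) + 1) j = xi r (i : ℕ) j) ∧
        (∀ y ∈ X, (∀ j, j ≠ i → y j = xi r (i : ℕ) j) →
            E.mulVec y ∈ Dg → F (xi r ((i : ℕ) + 1)) ≤ F y))
    (hxsucc : ∀ r, x (r + 1) = xi r n) :
    Summable (fun r => eucNorm (x r - x (r + 1)) ^ 2) :=
  ccm_f1_square_summable_general m n S lam hlam E hE Dg gr hgconv hCg hgs hgC2 hhess hA3 X hX F hF
    XStar hXStar hXStarNe x xi hx0 hx0fin hxi0 hstep hxsucc
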